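/- For every integer s ≥ 4 and every real number x with 1 − 2/s ≤ x ≤ s − 1 − 1/s, f_s(x) < 0. -/

import Mathlib

noncomputable section

/-- `f_s(x) = ln(sx+1) − (s−1)·x·ln(1 + 1/x)`. -/
def fS (s x : ℝ) : ℝ := Real.log (s * x + 1) - (s - 1) * x * Real.log (1 + 1 / x)

end

/-!
Since `∂f_s(x)/∂s = x / (sx + 1) - x log (1 + 1/x)` and `log (1 + 1/x) ≥ 1 / (x + 1)`, `f_s(x)` is
antitone in `s ≥ 1`. The constraint `x ≤ s - 1 - 1/s` forces `s > x + 1`, and `s ≥ 5` once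
`x > 11/4`, so it suffices to show `f_4 < 0` on `[1/2, 11/4]`, `f_5 < 0` on `[11/4, 4]` and
`f_{x+1}(x) < 0` for `x ≥ 4`. In each case `log (sx + 1)` is bounded above by a tangent line at a
point whose logarithm is known numerically, and `log (1 + 1/x)` below by the first terms of its
series in powers of `1 / (2x + 1)`.
-/

open Real Finset

theorem log_le_log_add_div_sub_one {y y₀ : ℝ} (hy : 0 < y) (hy₀ : 0 < y₀) :
    log y ≤ log y₀ + (y / y₀ - 1) := by
  have := log_le_sub_one_of_pos (div_pos hy hy₀)
  rw [log_div hy.ne' hy₀.ne'] at this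
  linarith

theorem two_div_add_le_log_one_add_inv {x : ℝ} (hx : 0 < x) :
    2 / (2 * x + 1) + 2 / (3 * (2 * x + 1) ^ 3) ≤ log (1 + 1 / x) := by
  have h := sum_le_hasSum (range 2) (fun k _ => by positivity) (hasSum_log_one_add_inv hx)
  rw [one_div x]
  refine le_trans (le_of_eq ?_) h
  norm_num [sum_range_succ]
  field_simp

theorem inv_add_one_le_log_one_add_inv {x : ℝ} (hx : 0 < x) :
    1 / (x + 1) ≤ log (1 + 1 / x) := by
  refine le_trans ?_ (two_div_add_le_log_one_add_inv hx)
  have : 1 / (x + 1) ≤ 2 / (2 * x + 1) := by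
    rw [div_le_div_iff₀ (by positivity) (by positivity)]; linarith
  have : 0 ≤ 2 / (3 * (2 * x + 1) ^ 3) := by positivity
  linarith

theorem fS_le_fS_of_le {σ s x : ℝ} (hσ : 1 ≤ σ) (hσs : σ ≤ s) (hx : 0 < x) :
    fS s x ≤ fS σ x := by
  have hσx : 0 < σ * x + 1 := by nlinarith
  have hlog := log_le_log_add_div_sub_one (y := s * x + 1) (by nlinarith) hσx
  have hquot : (s * x + 1) / (σ * x + 1) - 1 ≤ (s - σ) * x * (1 / (x + 1)) := by
    rw [div_sub_one hσx.ne', mul_one_div, div_le_div_iff₀ hσx (by linarith)]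
    have : 0 ≤ (s - σ) * x * ((σ - 1) * x) :=
      mul_nonneg (mul_nonneg (by linarith) hx.le) (mul_nonneg (by linarith) hx.le)
    nlinarith
  have := mul_le_mul_of_nonneg_left (inv_add_one_le_log_one_add_inv hx)
    (mul_nonneg (sub_nonneg.2 hσs) hx.le)
  unfold fS
  nlinarith

theorem fS_four_neg {x : ℝ} (h1 : 1 / 2 ≤ x) (h2 : x ≤ 11 / 4) : fS 4 x < 0 := by
  have hx : 0 < x := by linarith
  -- The margin is only about 0.03, so both the tangent point 9 and the cubic term matter.
  have hlog : log (4 * x + 1) ≤ 2 * log 3 + ((4 * x + 1) / 9 - 1) := by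
    have := log_le_log_add_div_sub_one (y := 4 * x + 1) (by linarith) (by norm_num : (0:ℝ) < 9)
    rwa [show log 9 = 2 * log 3 by rw [show (9:ℝ) = 3 ^ 2 by norm_num, log_pow]; norm_num] at this
  have hL := two_div_add_le_log_one_add_inv hx
  have key : 2 * 1.0986122888 + ((4 * x + 1) / 9 - 1) <
      3 * x * (2 / (2 * x + 1) + 2 / (3 * (2 * x + 1) ^ 3)) := by
    have hI : 0 ≤ (x - 1 / 2) * (11 / 4 - x) := mul_nonneg (by linarith) (by linarith)
    rw [div_add_div _ _ (by positivity) (by positivity), mul_div_assoc', lt_div_iff₀ (by positivity)]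
    nlinarith [mul_nonneg hI hx.le]
  have := mul_le_mul_of_nonneg_left hL (by positivity : (0:ℝ) ≤ 3 * x)
  have := log_three_lt_d9
  rw [fS]
  linarith

theorem fS_five_neg {x : ℝ} (h1 : 11 / 4 ≤ x) (h2 : x ≤ 4) : fS 5 x < 0 := by
  have hx : 0 < x := by linarith
  have hlog : log (5 * x + 1) ≤ 4 * log 2 + ((5 * x + 1) / 16 - 1) := by
    have := log_le_log_add_div_sub_one (y := 5 * x + 1) (by linarith) (by norm_num : (0:ℝ) < 16)
    rwa [show log 16 = 4 * log 2 by rw [show (16:ℝ) = 2 ^ 4 by norm_num, log_pow]; norm_num] at this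
  have hL := two_div_add_le_log_one_add_inv hx
  have key : 4 * 0.6931471808 + ((5 * x + 1) / 16 - 1) < 4 * x * (2 / (2 * x + 1)) := by
    rw [mul_div_assoc', lt_div_iff₀ (by positivity)]
    nlinarith
  have := mul_le_mul_of_nonneg_left hL (by positivity : (0:ℝ) ≤ 4 * x)
  have : 0 ≤ 4 * x * (2 / (3 * (2 * x + 1) ^ 3)) := by positivity
  have := log_two_lt_d9
  rw [fS]
  linarith

theorem fS_add_one_neg {x : ℝ} (h : 4 ≤ x) : fS (x + 1) x < 0 := by
  have hx : 0 < x := by linarith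
  have hlog : log ((x + 1) * x + 1) ≤ 2 * (2 * log 2 + ((x + 1) / 4 - 1)) := by
    have := log_le_log_add_div_sub_one (y := x + 1) (by linarith) (by norm_num : (0:ℝ) < 4)
    rw [show log 4 = 2 * log 2 by rw [show (4:ℝ) = 2 ^ 2 by norm_num, log_pow]; norm_num] at this
    have : log ((x + 1) * x + 1) ≤ log ((x + 1) ^ 2) := log_le_log (by positivity) (by nlinarith)
    rw [log_pow] at this
    push_cast at this
    linarith
  have hL := two_div_add_le_log_one_add_inv hx
  have key : 4 * 0.6931471808 + 2 * ((x + 1) / 4 - 1) < x * x * (2 / (2 * x + 1)) := by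
    rw [mul_div_assoc', lt_div_iff₀ (by positivity)]
    nlinarith
  have := mul_le_mul_of_nonneg_left hL (by positivity : (0:ℝ) ≤ x * x)
  have : 0 ≤ x * x * (2 / (3 * (2 * x + 1) ^ 3)) := by positivity
  have := log_two_lt_d9
  rw [fS]
  linarith

theorem stmt_8 (s : ℤ) (hs : 4 ≤ s) (x : ℝ)
    (h1 : 1 - 2 / (s : ℝ) ≤ x) (h2 : x ≤ (s : ℝ) - 1 - 1 / (s : ℝ)) :
    fS (s : ℝ) x < 0 := by
  have hs4 : (4 : ℝ) ≤ s := by exact_mod_cast hs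
  have hx : 1 / 2 ≤ x := by
    have : 2 / (s : ℝ) ≤ 1 / 2 := by rw [div_le_iff₀ (by linarith)]; linarith
    linarith
  have hxs : x + 1 < s := by
    have : (0 : ℝ) < 1 / s := by positivity
    linarith
  rcases le_or_gt x (11 / 4) with hA | hA
  · exact (fS_le_fS_of_le (by norm_num) hs4 (by linarith)).trans_lt (fS_four_neg hx hA)
  have hs5 : (5 : ℝ) ≤ s := by
    suffices (5 : ℤ) ≤ s by exact_mod_cast this
    by_contra! hs5
    obtain rfl : s = 4 := by omega
    norm_num at h2
    linarith
  rcases le_or_gt x 4 with hB | hB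
  · exact (fS_le_fS_of_le (by norm_num) hs5 (by linarith)).trans_lt (fS_five_neg hA.le hB)
  · exact (fS_le_fS_of_le (by linarith) hxs.le (by linarith)).trans_lt (fS_add_one_neg hB.le)
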